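/- arXiv:2011.08986 — 2 statements merged into one kernel-verified Lean document; each statement's English description precedes it below -/
import Mathlib

section
/- Let (μ,σ) be an SDE on an open set M ⊆ ℝⁿ and let V = (Y,C,τ,H) be an infinitesimal symmetry of (μ,σ), i.e. the determining equations Y(μ) − L(Y) − σ·H + τμ = 0 and [Y,σ] + ½τσ + σ·C = 0 hold on M. Then for every smooth function f ∈ C^∞(M): Y(L(f)) − L(Y(f)) = −τ·L(f) + (∇f)ᵀ·σ·H, where ∇f is the gradient of f. -/
open Matrix

/-- Partial derivative `∂ᵢ f` of a scalar function on `ℝⁿ`. -/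
noncomputable def pd {n : ℕ} (i : Fin n) (f : (Fin n → ℝ) → ℝ) (x : Fin n → ℝ) : ℝ :=
  fderiv ℝ f x (Pi.single i 1)

/-- Action `Y(f) = Yⁱ ∂ᵢ f` of a vector field on a scalar function. -/
noncomputable def vfd {n : ℕ} (Y : (Fin n → ℝ) → Fin n → ℝ)
    (f : (Fin n → ℝ) → ℝ) (x : Fin n → ℝ) : ℝ :=
  ∑ j, Y x j * pd j f x

/-- Infinitesimal generator `L(f) = ½ (σσᵀ)^{ij} ∂ᵢ∂ⱼ f + μⁱ ∂ᵢ f` of the SDE `(μ,σ)`. -/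
noncomputable def gen {n m : ℕ} (μ : (Fin n → ℝ) → Fin n → ℝ)
    (σ : (Fin n → ℝ) → Matrix (Fin n) (Fin m) ℝ)
    (f : (Fin n → ℝ) → ℝ) (x : Fin n → ℝ) : ℝ :=
  (1 / 2) * ∑ i, ∑ j, (∑ α, σ x i α * σ x j α) * pd i (pd j f) x
    + ∑ i, μ x i * pd i f x

/-- Entrywise smoothness of a vector-valued function on a set. -/
def SmoothVec {n k : ℕ} (M : Set (Fin n → ℝ)) (f : (Fin n → ℝ) → Fin k → ℝ) : Prop :=
  ∀ i, ContDiffOn ℝ (⊤ : ℕ∞) (fun x => f x i) M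

/-- Entrywise smoothness of a matrix-valued function on a set. -/
def SmoothMat {n k l : ℕ} (M : Set (Fin n → ℝ))
    (f : (Fin n → ℝ) → Matrix (Fin k) (Fin l) ℝ) : Prop :=
  ∀ i j, ContDiffOn ℝ (⊤ : ℕ∞) (fun x => f x i j) M

/-- The determining equations: `V = (Y,C,τ,H)` is an infinitesimal symmetry of the SDE
`(μ,σ)` on `M`, i.e. `Y(μ) − L(Y) − σ·H + τμ = 0` and `[Y,σ] + ½τσ + σ·C = 0` on `M`. -/
def DetEqs {n m : ℕ} (M : Set (Fin n → ℝ))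
    (μ : (Fin n → ℝ) → Fin n → ℝ) (σ : (Fin n → ℝ) → Matrix (Fin n) (Fin m) ℝ)
    (Y : (Fin n → ℝ) → Fin n → ℝ) (C : (Fin n → ℝ) → Matrix (Fin m) (Fin m) ℝ)
    (τ : (Fin n → ℝ) → ℝ) (H : (Fin n → ℝ) → Fin m → ℝ) : Prop :=
  (∀ x ∈ M, ∀ i, vfd Y (fun y => μ y i) x - gen μ σ (fun y => Y y i) x
      - (∑ α, σ x i α * H x α) + τ x * μ x i = 0) ∧
  (∀ x ∈ M, ∀ i, ∀ α, vfd Y (fun y => σ y i α) x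
      - (∑ j, σ x j α * pd j (fun y => Y y i) x)
      + (1 / 2) * τ x * σ x i α + (∑ β, σ x i β * C x β α) = 0)

/-! Since `Y` is a derivation and `L` is a derivation up to its carré du champ `Γ`,
`Y(L f) − L(Y f)` splits into the first-order part `(Y(μ) − L(Y))·∇f` and the second-order part
`½ Y(σσᵀ)·∇²f − Σₖ Γ(Yᵏ, ∂ₖf)`; the third-order terms cancel by the symmetry of derivatives.
The first determining equation turns the first-order part into `(σH − τμ)·∇f`. The second one
reads `Y(σ) = (∇Y)σ − ½τσ − σC`, so by antisymmetry of `C`,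
`Y(σσᵀ) = (∇Y)σσᵀ + σσᵀ(∇Y)ᵀ − τσσᵀ`; the `∇Y` terms are exactly those of `Σₖ Γ(Yᵏ, ∂ₖf)`,
and the second-order part reduces to `−½τ σσᵀ·∇²f`. -/

open scoped ContDiff

section Calculus

variable {n : ℕ} {M : Set (Fin n → ℝ)} {f g : (Fin n → ℝ) → ℝ} {x : Fin n → ℝ}

@[fun_prop]
theorem ContDiffOn.pd (hM : IsOpen M) (hf : ContDiffOn ℝ ∞ f M) (i : Fin n) :
    ContDiffOn ℝ ∞ (pd i f) M :=
  (hf.fderiv_of_isOpen hM (by simp)).clm_apply contDiffOn_const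

@[fun_prop]
theorem ContDiffOn.differentiableAt_of_mem (hM : IsOpen M) (hx : x ∈ M)
    (hf : ContDiffOn ℝ ∞ f M) : DifferentiableAt ℝ f x :=
  (hf.differentiableOn (by simp)).differentiableAt (hM.mem_nhds hx)

theorem pd_congr_of_eqOn (hM : IsOpen M) (h : Set.EqOn f g M) (hx : x ∈ M) (i : Fin n) :
    pd i f x = pd i g x := by
  unfold pd
  rw [(h.eventuallyEq_of_mem (hM.mem_nhds hx)).fderiv_eq]

theorem pd_add (hf : DifferentiableAt ℝ f x) (hg : DifferentiableAt ℝ g x) (i : Fin n) :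
    pd i (fun y => f y + g y) x = pd i f x + pd i g x := by
  simp [pd, fderiv_fun_add hf hg]

theorem pd_const_mul (c : ℝ) (hf : DifferentiableAt ℝ f x) (i : Fin n) :
    pd i (fun y => c * f y) x = c * pd i f x := by
  simp [pd, fderiv_const_mul hf]

theorem pd_mul (hf : DifferentiableAt ℝ f x) (hg : DifferentiableAt ℝ g x) (i : Fin n) :
    pd i (fun y => f y * g y) x = pd i f x * g x + f x * pd i g x := by
  simp only [pd, fderiv_fun_mul hf hg, _root_.add_apply, _root_.smul_apply, smul_eq_mul]
  ring

theorem pd_sum {ι : Type*} (s : Finset ι) {F : ι → (Fin n → ℝ) → ℝ}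
    (hF : ∀ k ∈ s, DifferentiableAt ℝ (F k) x) (i : Fin n) :
    pd i (fun y => ∑ k ∈ s, F k y) x = ∑ k ∈ s, pd i (F k) x := by
  simp [pd, fderiv_fun_sum hF]

theorem pd_comm (hf : ContDiffAt ℝ 2 f x) (i j : Fin n) :
    pd i (pd j f) x = pd j (pd i f) x := by
  have hdiff : DifferentiableAt ℝ (fderiv ℝ f) x :=
    (hf.fderiv_right (m := 1) (by norm_num)).differentiableAt (by simp)
  have hsecond : ∀ v w : Fin n → ℝ,
      fderiv ℝ (fun y => fderiv ℝ f y v) x w = fderiv ℝ (fderiv ℝ f) x w v := by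
    intro v w
    simp [fderiv_clm_apply hdiff (differentiableAt_const v)]
  change fderiv ℝ (fun y => fderiv ℝ f y (Pi.single j 1)) x (Pi.single i 1)
    = fderiv ℝ (fun y => fderiv ℝ f y (Pi.single i 1)) x (Pi.single j 1)
  rw [hsecond, hsecond, hf.isSymmSndFDerivAt (by simp)]

theorem pd_pd_pd_comm (hM : IsOpen M) (hf : ContDiffOn ℝ ∞ f M) (hx : x ∈ M) (i j k : Fin n) :
    pd k (pd i (pd j f)) x = pd i (pd j (pd k f)) x := by
  have hcomm : Set.EqOn (pd k (pd j f)) (pd j (pd k f)) M := fun y hy =>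
    pd_comm ((hf.contDiffAt (hM.mem_nhds hy)).of_le (by norm_cast)) k j
  rw [pd_comm (((hf.pd hM j).contDiffAt (hM.mem_nhds hx)).of_le (by norm_cast)) k i,
    pd_congr_of_eqOn hM hcomm hx i]

end Calculus

section Algebra

variable {R ι κ : Type*} [CommRing R] [Fintype ι] [Fintype κ]

theorem Matrix.mul_transpose_add_mul_transpose_of_eq {S D : Matrix ι κ R} {J : Matrix ι ι R}
    {C : Matrix κ κ R} {c : R} (hD : D = J * S - c • S - S * C) (hC : Cᵀ = -C) :
    D * Sᵀ + S * Dᵀ = J * (S * Sᵀ) + S * Sᵀ * Jᵀ - (2 * c) • (S * Sᵀ) := by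
  subst hD
  simp only [Matrix.transpose_sub, Matrix.transpose_mul, Matrix.transpose_smul, hC,
    Matrix.sub_mul, Matrix.mul_sub, Matrix.mul_neg, Matrix.neg_mul, Matrix.smul_mul,
    Matrix.mul_smul, Matrix.mul_assoc, two_mul, add_smul]
  abel

theorem Matrix.sum_sum_mul_add_mul_transpose_apply_mul (a J F : Matrix ι ι R) (hF : Fᵀ = F) :
    ∑ i, ∑ j, (J * a + a * Jᵀ) i j * F i j
      = ∑ k, ∑ i, ∑ j, a i j * (J k i * F j k + J k j * F i k) := by
  have hFsymm : ∀ i j, F i j = F j i := fun i j => congrFun (congrFun hF j) i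
  simp only [Matrix.add_apply, Matrix.mul_apply, Matrix.transpose_apply, add_mul, mul_add,
    Finset.sum_add_distrib, Finset.sum_mul]
  congr 1
  · refine Finset.sum_congr rfl fun i _ => ?_
    rw [Finset.sum_comm]
    refine Finset.sum_congr rfl fun l _ => Finset.sum_congr rfl fun j _ => ?_
    rw [hFsymm i j]
    ring
  · rw [Finset.sum_comm]
    exact Finset.sum_congr rfl fun j _ => Finset.sum_congr rfl fun i _ =>
      Finset.sum_congr rfl fun l _ => by ring

end Algebra

section Operators

variable {n m : ℕ} {M : Set (Fin n → ℝ)} {x : Fin n → ℝ}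
  {μ : (Fin n → ℝ) → Fin n → ℝ} {σ : (Fin n → ℝ) → Matrix (Fin n) (Fin m) ℝ}
  {Y : (Fin n → ℝ) → Fin n → ℝ} {f g : (Fin n → ℝ) → ℝ}

theorem vfd_add (hf : DifferentiableAt ℝ f x) (hg : DifferentiableAt ℝ g x) :
    vfd Y (fun y => f y + g y) x = vfd Y f x + vfd Y g x := by
  simp [vfd, pd_add hf hg, mul_add, Finset.sum_add_distrib]

theorem vfd_const_mul (c : ℝ) (hf : DifferentiableAt ℝ f x) :
    vfd Y (fun y => c * f y) x = c * vfd Y f x := by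
  simp [vfd, pd_const_mul c hf, Finset.mul_sum, mul_left_comm]

theorem vfd_mul (hf : DifferentiableAt ℝ f x) (hg : DifferentiableAt ℝ g x) :
    vfd Y (fun y => f y * g y) x = vfd Y f x * g x + f x * vfd Y g x := by
  simp only [vfd, pd_mul hf hg, Finset.sum_mul, Finset.mul_sum, ← Finset.sum_add_distrib]
  exact Finset.sum_congr rfl fun _ _ => by ring

theorem vfd_sum {ι : Type*} (s : Finset ι) {F : ι → (Fin n → ℝ) → ℝ}
    (hF : ∀ k ∈ s, DifferentiableAt ℝ (F k) x) :
    vfd Y (fun y => ∑ k ∈ s, F k y) x = ∑ k ∈ s, vfd Y (F k) x := by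
  simp only [vfd, pd_sum s hF, Finset.mul_sum]
  exact Finset.sum_comm

def diffusion (σ : (Fin n → ℝ) → Matrix (Fin n) (Fin m) ℝ) (y : Fin n → ℝ) (i j : Fin n) : ℝ :=
  ∑ α, σ y i α * σ y j α

theorem gen_eq_diffusion : gen μ σ f = fun y =>
    (1 / 2) * ∑ i, ∑ j, diffusion σ y i j * pd i (pd j f) y + ∑ i, μ y i * pd i f y :=
  rfl

@[fun_prop]
theorem SmoothMat.contDiffOn_diffusion (hσ : SmoothMat M σ) (i j : Fin n) :
    ContDiffOn ℝ ∞ (fun y => diffusion σ y i j) M :=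
  ContDiffOn.sum fun α _ => (hσ i α).mul (hσ j α)

noncomputable def carreDuChamp (σ : (Fin n → ℝ) → Matrix (Fin n) (Fin m) ℝ)
    (u v : (Fin n → ℝ) → ℝ) (x : Fin n → ℝ) : ℝ :=
  (1 / 2) * ∑ i, ∑ j, diffusion σ x i j * (pd i u x * pd j v x + pd j u x * pd i v x)

theorem gen_mul (hM : IsOpen M) (hx : x ∈ M) (hf : ContDiffOn ℝ ∞ f M)
    (hg : ContDiffOn ℝ ∞ g M) :
    gen μ σ (fun y => f y * g y) x
      = gen μ σ f x * g x + f x * gen μ σ g x + carreDuChamp σ f g x := by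
  have hfirst : ∀ j, Set.EqOn (pd j fun y => f y * g y)
      (fun y => pd j f y * g y + f y * pd j g y) M := fun j y hy =>
    pd_mul (by fun_prop (disch := assumption)) (by fun_prop (disch := assumption)) j
  have hsecond : ∀ i j, pd i (pd j fun y => f y * g y) x
      = pd i (pd j f) x * g x + pd j f x * pd i g x
        + (pd i f x * pd j g x + f x * pd i (pd j g) x) := fun i j => by
    rw [pd_congr_of_eqOn hM (hfirst j) hx]
    simp (disch := fun_prop (disch := assumption)) only [pd_add, pd_mul]
  simp only [gen_eq_diffusion, carreDuChamp, hsecond, pd_mul (hf.differentiableAt_of_mem hM hx)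
    (hg.differentiableAt_of_mem hM hx)]
  simp only [Finset.mul_sum, mul_add, Finset.sum_add_distrib, mul_comm, mul_left_comm,
    mul_assoc]
  ring

theorem gen_sum {ι : Type*} (s : Finset ι) {F : ι → (Fin n → ℝ) → ℝ} (hM : IsOpen M)
    (hx : x ∈ M) (hF : ∀ k ∈ s, ContDiffOn ℝ ∞ (F k) M) :
    gen μ σ (fun y => ∑ k ∈ s, F k y) x = ∑ k ∈ s, gen μ σ (F k) x := by
  have hfirst : ∀ j, Set.EqOn (pd j fun y => ∑ k ∈ s, F k y)
      (fun y => ∑ k ∈ s, pd j (F k) y) M := fun j y hy =>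
    pd_sum s (fun k hk => (hF k hk).differentiableAt_of_mem hM hy) j
  have hsecond : ∀ i j, pd i (pd j fun y => ∑ k ∈ s, F k y) x
      = ∑ k ∈ s, pd i (pd j (F k)) x := fun i j => by
    rw [pd_congr_of_eqOn hM (hfirst j) hx,
      pd_sum s (fun k hk => ((hF k hk).pd hM j).differentiableAt_of_mem hM hx)]
  simp only [gen_eq_diffusion, hsecond,
    pd_sum s (fun k hk => (hF k hk).differentiableAt_of_mem hM hx),
    Finset.mul_sum, Finset.sum_add_distrib]
  exact congrArg₂ (· + ·)
    ((Finset.sum_congr rfl fun _ _ => Finset.sum_comm).trans Finset.sum_comm) Finset.sum_comm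

theorem vfd_gen (hM : IsOpen M) (hx : x ∈ M) (hμ : SmoothVec M μ) (hσ : SmoothMat M σ)
    (hf : ContDiffOn ℝ ∞ f M) :
    vfd Y (gen μ σ f) x
      = (1 / 2) * ∑ i, ∑ j, (vfd Y (fun y => diffusion σ y i j) x * pd i (pd j f) x
          + diffusion σ x i j * vfd Y (pd i (pd j f)) x)
        + ∑ i, (vfd Y (fun y => μ y i) x * pd i f x + μ x i * vfd Y (pd i f) x) := by
  unfold SmoothVec at hμ
  rw [gen_eq_diffusion]
  simp (disch := intros; fun_prop (disch := assumption)) only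
    [vfd_add, vfd_const_mul, vfd_sum, vfd_mul]

theorem gen_vfd (hM : IsOpen M) (hx : x ∈ M) (hY : SmoothVec M Y) (hf : ContDiffOn ℝ ∞ f M) :
    gen μ σ (vfd Y f) x
      = ∑ k, (gen μ σ (fun y => Y y k) x * pd k f x + Y x k * gen μ σ (pd k f) x
        + carreDuChamp σ (fun y => Y y k) (pd k f) x) := by
  unfold SmoothVec at hY
  change gen μ σ (fun y => ∑ k, Y y k * pd k f y) x = _
  rw [gen_sum _ hM hx (fun k _ => by fun_prop (disch := assumption))]
  exact Finset.sum_congr rfl fun k _ => gen_mul hM hx (hY k) (hf.pd hM k)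

theorem sum_mul_gen_pd (hM : IsOpen M) (hx : x ∈ M) (hf : ContDiffOn ℝ ∞ f M) :
    ∑ k, Y x k * gen μ σ (pd k f) x
      = (1 / 2) * ∑ i, ∑ j, diffusion σ x i j * vfd Y (pd i (pd j f)) x
        + ∑ i, μ x i * vfd Y (pd i f) x := by
  have hsecond : ∀ i k, pd i (pd k f) x = pd k (pd i f) x := fun i k =>
    pd_comm ((hf.contDiffAt (hM.mem_nhds hx)).of_le (by norm_cast)) i k
  simp only [gen_eq_diffusion, vfd, Finset.mul_sum, mul_add, Finset.sum_add_distrib]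
  congr 1
  · rw [Finset.sum_comm]
    refine Finset.sum_congr rfl fun i _ => ?_
    rw [Finset.sum_comm]
    refine Finset.sum_congr rfl fun j _ => Finset.sum_congr rfl fun k _ => ?_
    rw [pd_pd_pd_comm hM hf hx i j k]
    ring
  · rw [Finset.sum_comm]
    refine Finset.sum_congr rfl fun i _ => Finset.sum_congr rfl fun k _ => ?_
    rw [hsecond]
    ring

theorem vfd_gen_sub_gen_vfd (hM : IsOpen M) (hx : x ∈ M) (hμ : SmoothVec M μ)
    (hσ : SmoothMat M σ) (hY : SmoothVec M Y) (hf : ContDiffOn ℝ ∞ f M) :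
    vfd Y (gen μ σ f) x - gen μ σ (vfd Y f) x
      = ∑ k, (vfd Y (fun y => μ y k) x - gen μ σ (fun y => Y y k) x) * pd k f x
        + ((1 / 2) * ∑ i, ∑ j, vfd Y (fun y => diffusion σ y i j) x * pd i (pd j f) x
          - ∑ k, carreDuChamp σ (fun y => Y y k) (pd k f) x) := by
  rw [vfd_gen hM hx hμ hσ hf, gen_vfd hM hx hY hf]
  simp only [Finset.sum_add_distrib, mul_add, sub_mul, Finset.sum_sub_distrib]
  rw [sum_mul_gen_pd hM hx hf]
  ring

theorem vfd_diffusion (hσ : ∀ i α, DifferentiableAt ℝ (fun y => σ y i α) x) (i j : Fin n) :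
    vfd Y (fun y => diffusion σ y i j) x
      = (Matrix.of (fun i α => vfd Y (fun y => σ y i α) x) * (σ x)ᵀ
          + σ x * (Matrix.of fun i α => vfd Y (fun y => σ y i α) x)ᵀ) i j := by
  simp only [diffusion]
  rw [vfd_sum (F := fun α y => σ y i α * σ y j α) _ fun α _ => (hσ i α).mul (hσ j α)]
  simp only [vfd_mul (hσ i _) (hσ j _), Matrix.add_apply, Matrix.mul_apply,
    Matrix.transpose_apply, Matrix.of_apply, Finset.sum_add_distrib]

theorem half_sum_vfd_diffusion_sub_sum_carreDuChamp (hM : IsOpen M) (hx : x ∈ M)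
    (hσ : SmoothMat M σ) (hf : ContDiffOn ℝ ∞ f M) {τ : ℝ} {C : Matrix (Fin m) (Fin m) ℝ}
    (hσY : ∀ i α, vfd Y (fun y => σ y i α) x - ∑ j, σ x j α * pd j (fun y => Y y i) x
      + 1 / 2 * τ * σ x i α + ∑ β, σ x i β * C β α = 0)
    (hC : Cᵀ = -C) :
    (1 / 2) * ∑ i, ∑ j, vfd Y (fun y => diffusion σ y i j) x * pd i (pd j f) x
        - ∑ k, carreDuChamp σ (fun y => Y y k) (pd k f) x
      = -τ * ((1 / 2) * ∑ i, ∑ j, diffusion σ x i j * pd i (pd j f) x) := by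
  set D : Matrix (Fin n) (Fin m) ℝ := Matrix.of fun i α => vfd Y (fun y => σ y i α) x
  set J : Matrix (Fin n) (Fin n) ℝ := Matrix.of fun i j => pd j (fun y => Y y i) x
  set F : Matrix (Fin n) (Fin n) ℝ := Matrix.of fun i j => pd i (pd j f) x
  set a : Matrix (Fin n) (Fin n) ℝ := σ x * (σ x)ᵀ
  have hD : D = J * σ x - (1 / 2 * τ) • σ x - σ x * C := by
    ext i α
    have hcomm : ∑ j, pd j (fun y => Y y i) x * σ x j α = ∑ j, σ x j α * pd j (fun y => Y y i) x :=
      Finset.sum_congr rfl fun j _ => mul_comm _ _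
    simp only [D, J, Matrix.sub_apply, Matrix.mul_apply, Matrix.smul_apply, Matrix.of_apply,
      smul_eq_mul, hcomm]
    linarith [hσY i α]
  have hF : Fᵀ = F := by
    ext i j
    exact pd_comm ((hf.contDiffAt (hM.mem_nhds hx)).of_le (by norm_cast)) j i
  have hvfd : ∀ i j, vfd Y (fun y => diffusion σ y i j) x = (J * a + a * Jᵀ) i j - τ * a i j := by
    intro i j
    rw [vfd_diffusion (fun i α => (hσ i α).differentiableAt_of_mem hM hx),
      Matrix.mul_transpose_add_mul_transpose_of_eq hD hC]
    change (J * a + a * Jᵀ - (2 * (1 / 2 * τ)) • a) i j = _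
    simp only [Matrix.sub_apply, Matrix.smul_apply, smul_eq_mul]
    ring
  have hΓ : ∑ k, carreDuChamp σ (fun y => Y y k) (pd k f) x
      = (1 / 2) * ∑ k, ∑ i, ∑ j, a i j * (J k i * F j k + J k j * F i k) := by
    rw [Finset.mul_sum]
    rfl
  change (1 / 2) * ∑ i, ∑ j, vfd Y (fun y => diffusion σ y i j) x * F i j - _
    = -τ * ((1 / 2) * ∑ i, ∑ j, a i j * F i j)
  rw [hΓ, ← Matrix.sum_sum_mul_add_mul_transpose_apply_mul a J F hF]
  simp only [hvfd, sub_mul, Finset.sum_sub_distrib, mul_assoc, ← Finset.mul_sum]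
  ring

end Operators

theorem statement5_general {n m : ℕ} (M : Set (Fin n → ℝ)) (hM : IsOpen M)
    (μ : (Fin n → ℝ) → Fin n → ℝ) (σ : (Fin n → ℝ) → Matrix (Fin n) (Fin m) ℝ)
    (Y : (Fin n → ℝ) → Fin n → ℝ) (C : (Fin n → ℝ) → Matrix (Fin m) (Fin m) ℝ)
    (τ : (Fin n → ℝ) → ℝ) (H : (Fin n → ℝ) → Fin m → ℝ)
    (hμ : SmoothVec M μ) (hσ : SmoothMat M σ) (hY : SmoothVec M Y)
    (hC : ∀ x ∈ M, (C x)ᵀ = -(C x))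
    (hsym : DetEqs M μ σ Y C τ H)
    (f : (Fin n → ℝ) → ℝ) (hf : ContDiffOn ℝ (⊤ : ℕ∞) f M) :
    ∀ x ∈ M,
      vfd Y (gen μ σ f) x - gen μ σ (vfd Y f) x =
        -(τ x) * gen μ σ f x + ∑ i, ∑ α, pd i f x * σ x i α * H x α := by
  intro x hx
  have hdrift : ∀ k, vfd Y (fun y => μ y k) x - gen μ σ (fun y => Y y k) x
      = ∑ α, σ x k α * H x α - τ x * μ x k := fun k => by
    linarith [hsym.1 x hx k]
  have hσH : ∑ k, (∑ α, σ x k α * H x α) * pd k f x = ∑ i, ∑ α, pd i f x * σ x i α * H x α :=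
    Finset.sum_congr rfl fun i _ => by
      rw [Finset.sum_mul]
      exact Finset.sum_congr rfl fun α _ => by ring
  have hτμ : ∑ k, τ x * μ x k * pd k f x = τ x * ∑ k, μ x k * pd k f x := by
    rw [Finset.mul_sum]
    exact Finset.sum_congr rfl fun k _ => by ring
  rw [vfd_gen_sub_gen_vfd hM hx hμ hσ hY hf,
    half_sum_vfd_diffusion_sub_sum_carreDuChamp hM hx hσ hf (hsym.2 x hx) (hC x hx)]
  simp only [hdrift, sub_mul, Finset.sum_sub_distrib, hσH, hτμ]
  rw [gen_eq_diffusion]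
  ring

/-- First identity of the technical Lemma: if `V = (Y,C,τ,H)` is an infinitesimal symmetry
of `(μ,σ)` then, for every smooth `f`, `Y(L(f)) − L(Y(f)) = −τ·L(f) + ∇(f)·σ·H`. -/
theorem statement5 {n m : ℕ} (M : Set (Fin n → ℝ)) (hM : IsOpen M)
    (μ : (Fin n → ℝ) → Fin n → ℝ) (σ : (Fin n → ℝ) → Matrix (Fin n) (Fin m) ℝ)
    (Y : (Fin n → ℝ) → Fin n → ℝ) (C : (Fin n → ℝ) → Matrix (Fin m) (Fin m) ℝ)
    (τ : (Fin n → ℝ) → ℝ) (H : (Fin n → ℝ) → Fin m → ℝ)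
    (hμ : SmoothVec M μ) (hσ : SmoothMat M σ) (hY : SmoothVec M Y)
    (hCs : SmoothMat M C) (hτ : ContDiffOn ℝ (⊤ : ℕ∞) τ M) (hH : SmoothVec M H)
    (hC : ∀ x ∈ M, (C x)ᵀ = -(C x))
    (hsym : DetEqs M μ σ Y C τ H)
    (f : (Fin n → ℝ) → ℝ) (hf : ContDiffOn ℝ (⊤ : ℕ∞) f M) :
    ∀ x ∈ M,
      vfd Y (gen μ σ f) x - gen μ σ (vfd Y f) x =
        -(τ x) * gen μ σ f x + ∑ i, ∑ α, pd i f x * σ x i α * H x α :=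
  statement5_general M hM μ σ Y C τ H hμ hσ hY hC hsym f hf
end

section
/- Let Φ₁: M → M' be a smooth diffeomorphism between open subsets of ℝⁿ, let B₁: M → SO(m) and η₁: M → ℝ₊ be smooth, let σ: M → Mat(n,m) be smooth, and let 𝔥₁ ∈ C^∞(M), 𝔥₂ ∈ C^∞(M'). Define σ̃ = ((1/√η₁)·∇Φ₁·σ·B₁⁻¹)∘Φ₁⁻¹ (the transformed diffusion coefficient), h₁ = σᵀ·∇𝔥₁ on M and h₂ = σ̃ᵀ·∇𝔥₂ on M'. Then the composed Girsanov component ĥ = √η₁·B₁⁻¹·(h₂∘Φ₁) + h₁ satisfies ĥ = σᵀ·∇(𝔥₂∘Φ₁ + 𝔥₁) on M. (Hence the composition of quasi Doob transformations is a quasi Doob transformation, characterized by the function 𝔥₂∘Φ₁ + 𝔥₁.) -/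
open Matrix

/-- The drift of the transformed SDE `E_T(μ,σ)`:
`E_T(μ) = ((1/η)[L(Φ) + ∇Φ·σ·h]) ∘ Φ⁻¹`, where `Ψ = Φ⁻¹`. -/
noncomputable def ETmu {n m : ℕ} (Φ Ψ : (Fin n → ℝ) → Fin n → ℝ)
    (η : (Fin n → ℝ) → ℝ) (h : (Fin n → ℝ) → Fin m → ℝ)
    (μ : (Fin n → ℝ) → Fin n → ℝ) (σ : (Fin n → ℝ) → Matrix (Fin n) (Fin m) ℝ)
    (y : Fin n → ℝ) : Fin n → ℝ := fun i =>
  (η (Ψ y))⁻¹ * (gen μ σ (fun z => Φ z i) (Ψ y)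
    + ∑ j, ∑ α, pd j (fun z => Φ z i) (Ψ y) * σ (Ψ y) j α * h (Ψ y) α)

/-- The diffusion coefficient of the transformed SDE `E_T(μ,σ)`:
`E_T(σ) = ((1/√η)·∇Φ·σ·B⁻¹) ∘ Φ⁻¹`, where `Ψ = Φ⁻¹`. -/
noncomputable def ETsigma {n m : ℕ} (Φ Ψ : (Fin n → ℝ) → Fin n → ℝ)
    (B : (Fin n → ℝ) → Matrix (Fin m) (Fin m) ℝ) (η : (Fin n → ℝ) → ℝ)
    (σ : (Fin n → ℝ) → Matrix (Fin n) (Fin m) ℝ)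
    (y : Fin n → ℝ) : Matrix (Fin n) (Fin m) ℝ :=
  Matrix.of fun i α =>
    (Real.sqrt (η (Ψ y)))⁻¹ *
      ∑ j, ∑ β, pd j (fun z => Φ z i) (Ψ y) * σ (Ψ y) j β * (B (Ψ y))⁻¹ β α

/-! The chain rule gives `∇(𝔥₂ ∘ Φ₁) = (∇Φ₁)ᵀ · (∇𝔥₂ ∘ Φ₁)`. On the other side, pulling `σ̃` back
along `Φ₁` gives `√η₁ · B₁⁻¹ · σ̃ᵀ = B₁⁻¹ B₁⁻¹ᵀ · σᵀ · (∇Φ₁)ᵀ`, and `B₁⁻¹ B₁⁻¹ᵀ = 1` because `B₁` is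
orthogonal; so the first summand of `ĥ` is `σᵀ · ∇(𝔥₂ ∘ Φ₁)`, and linearity of `∇` finishes. -/

noncomputable def jacobian {n k : ℕ} (Φ : (Fin n → ℝ) → Fin k → ℝ) (x : Fin n → ℝ) :
    Matrix (Fin k) (Fin n) ℝ :=
  Matrix.of fun i j => pd j (fun z => Φ z i) x

noncomputable def grad {n : ℕ} (f : (Fin n → ℝ) → ℝ) (x : Fin n → ℝ) : Fin n → ℝ :=
  fun i => pd i f x

lemma ContDiffOn.differentiableAt_of_isOpen {E F : Type*} [NormedAddCommGroup E]
    [NormedSpace ℝ E] [NormedAddCommGroup F] [NormedSpace ℝ F] {M : Set E} {f : E → F}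
    (hf : ContDiffOn ℝ (⊤ : ℕ∞) f M) (hM : IsOpen M) {x : E} (hx : x ∈ M) :
    DifferentiableAt ℝ f x :=
  (hf.contDiffAt (hM.mem_nhds hx)).differentiableAt (by simp)

lemma SmoothVec.differentiableAt {n k : ℕ} {M : Set (Fin n → ℝ)} {f : (Fin n → ℝ) → Fin k → ℝ}
    (hf : SmoothVec M f) (hM : IsOpen M) {x : Fin n → ℝ} (hx : x ∈ M) :
    DifferentiableAt ℝ f x :=
  differentiableAt_pi.mpr fun i => (hf i).differentiableAt_of_isOpen hM hx

lemma ContinuousLinearMap.apply_eq_sum_mul_apply_single {n : ℕ} (L : (Fin n → ℝ) →L[ℝ] ℝ)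
    (v : Fin n → ℝ) : L v = ∑ j, v j * L (Pi.single j 1) := by
  conv_lhs => rw [pi_eq_sum_univ' v]
  simp [map_sum]

lemma grad_add {n : ℕ} {f g : (Fin n → ℝ) → ℝ} {x : Fin n → ℝ}
    (hf : DifferentiableAt ℝ f x) (hg : DifferentiableAt ℝ g x) :
    grad (fun y => f y + g y) x = grad f x + grad g x := by
  ext i
  simp only [grad, pd, fderiv_fun_add hf hg, _root_.add_apply, Pi.add_apply]

lemma grad_comp {n k : ℕ} {f : (Fin k → ℝ) → ℝ} {Φ : (Fin n → ℝ) → Fin k → ℝ} {x : Fin n → ℝ}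
    (hf : DifferentiableAt ℝ f (Φ x)) (hΦ : DifferentiableAt ℝ Φ x) :
    grad (fun y => f (Φ y)) x = (jacobian Φ x)ᵀ *ᵥ grad f (Φ x) := by
  ext i
  have hΦi : ∀ j, DifferentiableAt ℝ (fun y => Φ y j) x := differentiableAt_pi.mp hΦ
  simp only [grad, pd, jacobian, fderiv_fun_comp x hf hΦ, ContinuousLinearMap.comp_apply,
    fderiv_pi hΦi, Matrix.mulVec, dotProduct, Matrix.transpose_apply, Matrix.of_apply]
  rw [ContinuousLinearMap.apply_eq_sum_mul_apply_single]
  simp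

lemma ETsigma_eq_smul {n m : ℕ} (Φ Ψ : (Fin n → ℝ) → Fin n → ℝ)
    (B : (Fin n → ℝ) → Matrix (Fin m) (Fin m) ℝ) (η : (Fin n → ℝ) → ℝ)
    (σ : (Fin n → ℝ) → Matrix (Fin n) (Fin m) ℝ) (y : Fin n → ℝ) :
    ETsigma Φ Ψ B η σ y =
      (Real.sqrt (η (Ψ y)))⁻¹ • (jacobian Φ (Ψ y) * σ (Ψ y) * (B (Ψ y))⁻¹) := by
  ext i α
  simp only [ETsigma, jacobian, Matrix.of_apply, Matrix.smul_apply, Matrix.mul_apply,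
    Finset.sum_mul, smul_eq_mul]
  rw [Finset.sum_comm]

lemma Matrix.inv_mul_transpose_inv_of_mul_transpose_eq_one {m K : Type*} [Fintype m]
    [DecidableEq m] [CommRing K] {B : Matrix m m K} (hB : B * Bᵀ = 1) :
    B⁻¹ * (B⁻¹)ᵀ = 1 := by
  rw [Matrix.inv_eq_right_inv hB, Matrix.transpose_transpose, mul_eq_one_comm.mp hB]

lemma smul_inv_mulVec_transpose_mulVec {k n m K : Type*} [Fintype k] [Fintype n] [Fintype m]
    [DecidableEq m] [Field K] {c : K} (hc : c ≠ 0) (J : Matrix k n K) (S : Matrix n m K)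
    {B : Matrix m m K} (hB : B * Bᵀ = 1) (v : k → K) :
    c • (B⁻¹ *ᵥ ((c⁻¹ • (J * S * B⁻¹))ᵀ *ᵥ v)) = Sᵀ *ᵥ (Jᵀ *ᵥ v) := by
  rw [Matrix.transpose_smul, Matrix.smul_mulVec, Matrix.mulVec_smul, smul_smul,
    mul_inv_cancel₀ hc, one_smul, Matrix.transpose_mul, Matrix.transpose_mul,
    Matrix.mulVec_mulVec, Matrix.mulVec_mulVec, ← Matrix.mul_assoc, ← Matrix.mul_assoc,
    Matrix.inv_mul_transpose_inv_of_mul_transpose_eq_one hB, Matrix.one_mul]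

theorem statement9_general {n m : ℕ}
    (M M' : Set (Fin n → ℝ)) (hM : IsOpen M) (hM' : IsOpen M')
    (σ : (Fin n → ℝ) → Matrix (Fin n) (Fin m) ℝ)
    (Φ₁ Ψ₁ : (Fin n → ℝ) → Fin n → ℝ)
    (B₁ : (Fin n → ℝ) → Matrix (Fin m) (Fin m) ℝ) (η₁ : (Fin n → ℝ) → ℝ)
    (hΦ₁map : Set.MapsTo Φ₁ M M')
    (hΦ₁inv : ∀ x ∈ M, Ψ₁ (Φ₁ x) = x)
    (hΦ₁s : SmoothVec M Φ₁)
    (hSO₁ : ∀ x ∈ M, B₁ x * (B₁ x)ᵀ = 1 ∧ (B₁ x).det = 1) (hpos₁ : ∀ x ∈ M, 0 < η₁ x)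
    (𝔥₁ 𝔥₂ : (Fin n → ℝ) → ℝ)
    (h𝔥₁ : ContDiffOn ℝ (⊤ : ℕ∞) 𝔥₁ M) (h𝔥₂ : ContDiffOn ℝ (⊤ : ℕ∞) 𝔥₂ M') :
    ∀ x ∈ M, ∀ α,
      Real.sqrt (η₁ x) *
          (∑ β, (B₁ x)⁻¹ α β *
            (∑ i, ETsigma Φ₁ Ψ₁ B₁ η₁ σ (Φ₁ x) i β * pd i 𝔥₂ (Φ₁ x)))
        + (∑ i, σ x i α * pd i 𝔥₁ x) =
      ∑ i, σ x i α * pd i (fun y => 𝔥₂ (Φ₁ y) + 𝔥₁ y) x := by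
  intro x hx α
  have hd𝔥₂ := h𝔥₂.differentiableAt_of_isOpen hM' (hΦ₁map hx)
  have hdΦ₁ := hΦ₁s.differentiableAt hM hx
  have hd𝔥₁ := h𝔥₁.differentiableAt_of_isOpen hM hx
  have hsqrt : Real.sqrt (η₁ x) ≠ 0 := Real.sqrt_ne_zero'.mpr (hpos₁ x hx)
  have hmatrix : Real.sqrt (η₁ x) • ((B₁ x)⁻¹ *ᵥ ((ETsigma Φ₁ Ψ₁ B₁ η₁ σ (Φ₁ x))ᵀ *ᵥ grad 𝔥₂ (Φ₁ x)))
      + (σ x)ᵀ *ᵥ grad 𝔥₁ x = (σ x)ᵀ *ᵥ grad (fun y => 𝔥₂ (Φ₁ y) + 𝔥₁ y) x := by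
    rw [grad_add (hd𝔥₂.fun_comp' x hdΦ₁) hd𝔥₁, grad_comp hd𝔥₂ hdΦ₁, ETsigma_eq_smul, hΦ₁inv x hx,
      smul_inv_mulVec_transpose_mulVec hsqrt _ _ (hSO₁ x hx).1, Matrix.mulVec_add]
  simpa only [Pi.add_apply, Pi.smul_apply, smul_eq_mul, Matrix.mulVec, dotProduct,
    Matrix.transpose_apply, grad] using congrFun hmatrix α

/-- Composition of quasi Doob transformations: if `h₁ = σᵀ·∇𝔥₁` and `h₂ = σ̃ᵀ·∇𝔥₂` (with
`σ̃ = ((1/√η₁)·∇Φ₁·σ·B₁⁻¹)∘Φ₁⁻¹` the transformed diffusion coefficient), then the composed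
Girsanov component `ĥ = √η₁·B₁⁻¹·(h₂∘Φ₁) + h₁` satisfies `ĥ = σᵀ·∇(𝔥₂∘Φ₁ + 𝔥₁)` on `M`. -/
theorem statement9 {n m : ℕ}
    (M M' : Set (Fin n → ℝ)) (hM : IsOpen M) (hM' : IsOpen M')
    (σ : (Fin n → ℝ) → Matrix (Fin n) (Fin m) ℝ) (hσ : SmoothMat M σ)
    (Φ₁ Ψ₁ : (Fin n → ℝ) → Fin n → ℝ)
    (B₁ : (Fin n → ℝ) → Matrix (Fin m) (Fin m) ℝ) (η₁ : (Fin n → ℝ) → ℝ)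
    (hΦ₁map : Set.MapsTo Φ₁ M M') (hΨ₁map : Set.MapsTo Ψ₁ M' M)
    (hΦ₁inv : ∀ x ∈ M, Ψ₁ (Φ₁ x) = x) (hΨ₁inv : ∀ y ∈ M', Φ₁ (Ψ₁ y) = y)
    (hΦ₁s : SmoothVec M Φ₁) (hΨ₁s : SmoothVec M' Ψ₁)
    (hB₁s : SmoothMat M B₁) (hη₁s : ContDiffOn ℝ (⊤ : ℕ∞) η₁ M)
    (hSO₁ : ∀ x ∈ M, B₁ x * (B₁ x)ᵀ = 1 ∧ (B₁ x).det = 1) (hpos₁ : ∀ x ∈ M, 0 < η₁ x)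
    (𝔥₁ 𝔥₂ : (Fin n → ℝ) → ℝ)
    (h𝔥₁ : ContDiffOn ℝ (⊤ : ℕ∞) 𝔥₁ M) (h𝔥₂ : ContDiffOn ℝ (⊤ : ℕ∞) 𝔥₂ M') :
    ∀ x ∈ M, ∀ α,
      Real.sqrt (η₁ x) *
          (∑ β, (B₁ x)⁻¹ α β *
            (∑ i, ETsigma Φ₁ Ψ₁ B₁ η₁ σ (Φ₁ x) i β * pd i 𝔥₂ (Φ₁ x)))
        + (∑ i, σ x i α * pd i 𝔥₁ x) =
      ∑ i, σ x i α * pd i (fun y => 𝔥₂ (Φ₁ y) + 𝔥₁ y) x :=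
  statement9_general M M' hM hM' σ Φ₁ Ψ₁ B₁ η₁ hΦ₁map hΦ₁inv hΦ₁s hSO₁ hpos₁ 𝔥₁ 𝔥₂ h𝔥₁ h𝔥₂
end
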